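/- arXiv:2102.04462 — 4 statements merged into one kernel-verified Lean document; each statement's English description precedes it below -/
import Mathlib

section
/- For θ>0 and J≥1, the function p(l) = (θ/J)/((θ/J)+c) · (c-l+1)_(l)/((θ/J)+c-l)_(l), defined for integers l = 0,1,…,c, is a probability mass function: p(l) ≥ 0 for all l and ∑_{l=0}^{c} p(l) = 1. -/
theorem cms_dp_posterior_is_pmf (θ J : ℝ) (hθ : 0 < θ) (hJ : 1 ≤ J) (c : ℕ) :
    (∀ l ≤ c, 0 ≤ (θ / J) / (θ / J + c) *
        ((∏ i ∈ Finset.range l, ((c : ℝ) - l + 1 + i)) /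
          (∏ i ∈ Finset.range l, (θ / J + (c : ℝ) - l + i)))) ∧
    ∑ l ∈ Finset.range (c + 1),
        (θ / J) / (θ / J + c) *
          ((∏ i ∈ Finset.range l, ((c : ℝ) - l + 1 + i)) /
            (∏ i ∈ Finset.range l, (θ / J + (c : ℝ) - l + i))) = 1 := by
  set a := θ / J with ha_def
  have ha : 0 < a := div_pos hθ (lt_of_lt_of_le one_pos hJ)
  have hac : 0 < a + c := by positivity
  constructor
  · intro l hl
    have hlc : (l : ℝ) ≤ c := by exact_mod_cast hl
    refine mul_nonneg (le_of_lt (div_pos ha hac)) (div_nonneg ?_ ?_)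
    · refine Finset.prod_nonneg fun i _ => ?_
      have : (0:ℝ) ≤ i := Nat.cast_nonneg i
      linarith
    · refine Finset.prod_nonneg fun i _ => ?_
      have : (0:ℝ) ≤ i := Nat.cast_nonneg i
      linarith
  · have key : ∀ l ≤ c,
        a / (a + c) * ((∏ i ∈ Finset.range l, ((c : ℝ) - l + 1 + i)) /
            (∏ i ∈ Finset.range l, (a + (c : ℝ) - l + i)))
        = (∏ i ∈ Finset.range l, ((c:ℝ) - i)) / (∏ i ∈ Finset.range l, (a + (c:ℝ) - i))
          - (∏ i ∈ Finset.range (l+1), ((c:ℝ) - i)) /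
            (∏ i ∈ Finset.range (l+1), (a + (c:ℝ) - i)) := by
      intro l hl
      have hlc : (l : ℝ) ≤ c := by exact_mod_cast hl
      have hnum : (∏ i ∈ Finset.range l, ((c : ℝ) - l + 1 + i))
          = ∏ i ∈ Finset.range l, ((c:ℝ) - i) := by
        rw [← Finset.prod_range_reflect (fun i => (c:ℝ) - i) l]
        refine Finset.prod_congr rfl fun i hi => ?_
        have hi' : i < l := Finset.mem_range.mp hi
        have h1 : 1 ≤ l := by omega
        have h2 : i ≤ l - 1 := Nat.le_sub_one_of_lt hi'
        have : ((l - 1 - i : ℕ) : ℝ) = (l:ℝ) - 1 - i := by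
          push_cast [Nat.cast_sub h2, Nat.cast_sub h1]
          ring
        rw [this]; ring
      have hden : (∏ i ∈ Finset.range l, (a + (c : ℝ) - l + i))
          = ∏ i ∈ Finset.range l, (a + (c:ℝ) - 1 - i) := by
        rw [← Finset.prod_range_reflect (fun i => a + (c:ℝ) - 1 - i) l]
        refine Finset.prod_congr rfl fun i hi => ?_
        have hi' : i < l := Finset.mem_range.mp hi
        have h1 : 1 ≤ l := by omega
        have h2 : i ≤ l - 1 := Nat.le_sub_one_of_lt hi'
        have : ((l - 1 - i : ℕ) : ℝ) = (l:ℝ) - 1 - i := by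
          push_cast [Nat.cast_sub h2, Nat.cast_sub h1]
          ring
        rw [this]; ring
      have hQpos : ∀ m ≤ c + 1, 0 < ∏ i ∈ Finset.range m, (a + (c:ℝ) - i) := by
        intro m hm
        refine Finset.prod_pos fun i hi => ?_
        have hic : i ≤ c := by
          have := Finset.mem_range.mp hi; omega
        have : (i:ℝ) ≤ c := by exact_mod_cast hic
        linarith
      have hQl : 0 < ∏ i ∈ Finset.range l, (a + (c:ℝ) - i) := hQpos l (by omega)
      have hDpos : 0 < ∏ i ∈ Finset.range l, (a + (c:ℝ) - 1 - i) := by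
        rw [← hden]
        refine Finset.prod_pos fun i hi => ?_
        have : (0:ℝ) ≤ i := Nat.cast_nonneg i
        linarith
      have hQsucc' : ∏ i ∈ Finset.range (l+1), (a + (c:ℝ) - i)
          = (∏ i ∈ Finset.range l, (a + (c:ℝ) - 1 - i)) * (a + c) := by
        rw [Finset.prod_range_succ' (fun i => a + (c:ℝ) - i) l]
        congr 1
        · refine Finset.prod_congr rfl fun i _ => ?_
          push_cast
          ring
        · norm_num
      have hD : (∏ i ∈ Finset.range l, (a + (c:ℝ) - i)) * (a + (c:ℝ) - l)
          = (∏ i ∈ Finset.range l, (a + (c:ℝ) - 1 - i)) * (a + c) := by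
        rw [← hQsucc', Finset.prod_range_succ]
      rw [hnum, hden, Finset.prod_range_succ, Finset.prod_range_succ]
      have hal : 0 < a + (c:ℝ) - l := by linarith
      calc a / (a + ↑c) * ((∏ i ∈ Finset.range l, ((c:ℝ) - ↑i)) /
              ∏ i ∈ Finset.range l, (a + (c:ℝ) - 1 - ↑i))
          = a * (∏ i ∈ Finset.range l, ((c:ℝ) - ↑i)) /
              ((∏ i ∈ Finset.range l, (a + (c:ℝ) - 1 - ↑i)) * (a + ↑c)) := by
            rw [div_mul_div_comm, mul_comm (a + (c:ℝ))]
        _ = a * (∏ i ∈ Finset.range l, ((c:ℝ) - ↑i)) /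
              ((∏ i ∈ Finset.range l, (a + (c:ℝ) - ↑i)) * (a + (c:ℝ) - ↑l)) := by
            rw [← hD]
        _ = (∏ i ∈ Finset.range l, ((c:ℝ) - ↑i)) / (∏ i ∈ Finset.range l, (a + (c:ℝ) - ↑i))
            - (∏ i ∈ Finset.range l, ((c:ℝ) - ↑i)) * ((c:ℝ) - ↑l) /
              ((∏ i ∈ Finset.range l, (a + (c:ℝ) - ↑i)) * (a + (c:ℝ) - ↑l)) := by
            rw [div_sub_div _ _ (ne_of_gt hQl) (by positivity)]
            rw [div_eq_div_iff (by positivity) (by positivity)]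
            ring
    calc ∑ l ∈ Finset.range (c + 1),
        a / (a + c) * ((∏ i ∈ Finset.range l, ((c : ℝ) - l + 1 + i)) /
            (∏ i ∈ Finset.range l, (a + (c : ℝ) - l + i)))
        = ∑ l ∈ Finset.range (c + 1),
          ((fun m => (∏ i ∈ Finset.range m, ((c:ℝ) - i)) /
              (∏ i ∈ Finset.range m, (a + (c:ℝ) - i))) l
           - (fun m => (∏ i ∈ Finset.range m, ((c:ℝ) - i)) /
              (∏ i ∈ Finset.range m, (a + (c:ℝ) - i))) (l+1)) := by
          refine Finset.sum_congr rfl fun l hl => ?_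
          exact key l (Nat.lt_succ_iff.mp (Finset.mem_range.mp hl))
      _ = 1 := by
          rw [Finset.sum_range_sub']
          have h0 : (∏ i ∈ Finset.range (c+1), ((c:ℝ) - i)) = 0 := by
            apply Finset.prod_eq_zero (Finset.self_mem_range_succ c)
            simp
          simp [h0]
end

section
/- For θ>0 and integers 0≤l≤m, the distribution p(l) = θ/(θ+m) · (m-l+1)_(l)/((θ+m-l)_(l)) sums to 1 over l=0,1,…,m. -/
theorem dp_marginal_frequency_sums_to_one (θ : ℝ) (hθ : 0 < θ) (m : ℕ) :
    ∑ l ∈ Finset.range (m + 1),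
        θ / (θ + m) *
          ((∏ i ∈ Finset.range l, ((m : ℝ) - l + 1 + i)) /
            (∏ i ∈ Finset.range l, (θ + (m : ℝ) - l + i))) = 1 := by
  set G : ℕ → ℝ := fun l => ∏ i ∈ Finset.range l, (((m : ℝ) - i) / (θ + m - i)) with hG
  have key : ∀ l ∈ Finset.range (m + 1),
      θ / (θ + m) * ((∏ i ∈ Finset.range l, ((m : ℝ) - l + 1 + i)) /
            (∏ i ∈ Finset.range l, (θ + (m : ℝ) - l + i))) = G l - G (l + 1) := by
    intro l hl
    rw [Finset.mem_range, Nat.lt_succ_iff] at hl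
    have h1 : (∏ i ∈ Finset.range l, ((m : ℝ) - l + 1 + i))
        = ∏ i ∈ Finset.range l, ((m : ℝ) - i) := by
      rw [← Finset.prod_range_reflect (fun i => (m : ℝ) - i) l]
      refine Finset.prod_congr rfl fun i hi => ?_
      rw [Finset.mem_range] at hi
      have : ((l - 1 - i : ℕ) : ℝ) = (l : ℝ) - 1 - i := by
        rw [Nat.sub_sub, Nat.cast_sub (by omega)]
        push_cast; ring
      rw [this]; ring
    have h2 : (∏ i ∈ Finset.range l, (θ + (m : ℝ) - l + i))
        = ∏ i ∈ Finset.range l, (θ + (m : ℝ) - 1 - i) := by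
      rw [← Finset.prod_range_reflect (fun i => θ + (m : ℝ) - 1 - i) l]
      refine Finset.prod_congr rfl fun i hi => ?_
      rw [Finset.mem_range] at hi
      have : ((l - 1 - i : ℕ) : ℝ) = (l : ℝ) - 1 - i := by
        rw [Nat.sub_sub, Nat.cast_sub (by omega)]
        push_cast; ring
      rw [this]; ring
    set N : ℝ := ∏ i ∈ Finset.range l, ((m : ℝ) - i) with hN
    set D : ℝ := ∏ i ∈ Finset.range l, (θ + (m : ℝ) - 1 - i) with hD
    set P : ℝ := ∏ i ∈ Finset.range l, (θ + (m : ℝ) - i) with hP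
    have hPpos : 0 < P := by
      refine Finset.prod_pos fun i hi => ?_
      rw [Finset.mem_range] at hi
      have : (i : ℝ) ≤ m := by exact_mod_cast Nat.le_of_lt (lt_of_lt_of_le hi hl)
      linarith
    have hDpos : 0 < D := by
      refine Finset.prod_pos fun i hi => ?_
      rw [Finset.mem_range] at hi
      have : (i : ℝ) + 1 ≤ m := by exact_mod_cast Nat.succ_le_of_lt (lt_of_lt_of_le hi hl)
      linarith
    have hθm : (0 : ℝ) < θ + m := by positivity
    have hθml : (0 : ℝ) < θ + m - l := by
      have : (l : ℝ) ≤ m := by exact_mod_cast hl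
      linarith
    have hPD : (θ + (m : ℝ)) * D = (θ + (m : ℝ) - l) * P := by
      have e1 := Finset.prod_range_succ (fun i : ℕ => θ + (m : ℝ) - i) l
      have e2 := Finset.prod_range_succ' (fun i : ℕ => θ + (m : ℝ) - i) l
      have e3 : (∏ i ∈ Finset.range l, (θ + (m : ℝ) - ↑(i + 1))) = D := by
        rw [hD]; exact Finset.prod_congr rfl fun i _ => by push_cast; ring
      rw [e3] at e2
      have e4 := e1.symm.trans e2
      push_cast at e4 ⊢
      linarith [e4]
    have hGl : G l = N / P := by
      simp only [hG, hN, hP, Finset.prod_div_distrib]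
    have hGl1 : G (l + 1) = (N / P) * (((m : ℝ) - l) / (θ + m - l)) := by
      have : G (l + 1) = G l * (((m : ℝ) - l) / (θ + m - l)) := by
        simp only [hG]
        exact Finset.prod_range_succ _ l
      rw [this, hGl]
    rw [h1, h2, hGl, hGl1]
    field_simp
    linear_combination (-(N * θ)) * hPD
  rw [Finset.sum_congr rfl key, Finset.sum_range_sub' G (m + 1)]
  have hG0 : G 0 = 1 := by simp [hG]
  have hGm : G (m + 1) = 0 := by
    rw [hG]
    apply Finset.prod_eq_zero (Finset.self_mem_range_succ m)
    simp
  rw [hG0, hGm, sub_zero]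
end

section
/- Let θ>0 and m≥0. The mean of the distribution p(l) = θ/(θ+m) · (m-l+1)_(l)/((θ+m-l)_(l)) on {0,1,…,m} equals m/(θ+1). -/
namespace DPMarginalAux

noncomputable def Nf (m l : ℕ) : ℝ := ∏ i ∈ Finset.range l, ((m : ℝ) - l + 1 + i)

noncomputable def Df (θ : ℝ) (m l : ℕ) : ℝ := ∏ i ∈ Finset.range l, (θ + (m : ℝ) - l + i)

lemma Nf_succ (m l : ℕ) : Nf m (l + 1) = ((m : ℝ) - l) * Nf m l := by
  unfold Nf
  rw [Finset.prod_range_succ' (fun i => (m : ℝ) - (l + 1 : ℕ) + 1 + i)]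
  push_cast
  rw [mul_comm]
  congr 1
  · ring
  · apply Finset.prod_congr rfl
    intro i _
    ring

lemma Df_succ (θ : ℝ) (m l : ℕ) : Df θ m (l + 1) = (θ + (m : ℝ) - l - 1) * Df θ m l := by
  unfold Df
  rw [Finset.prod_range_succ' (fun i => θ + (m : ℝ) - (l + 1 : ℕ) + i)]
  push_cast
  rw [mul_comm]
  congr 1
  · ring
  · apply Finset.prod_congr rfl
    intro i _
    ring

lemma Df_pos (θ : ℝ) (hθ : 0 < θ) (m l : ℕ) (hl : l ≤ m) : 0 < Df θ m l := by
  unfold Df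
  apply Finset.prod_pos
  intro i _
  have : (l : ℝ) ≤ m := by exact_mod_cast hl
  have hi : (0 : ℝ) ≤ i := by positivity
  linarith

lemma key (θ : ℝ) (hθ : 0 < θ) (m : ℕ) :
    ∀ n, n ≤ m →
      ∑ l ∈ Finset.range (n + 1),
        (l : ℝ) * (θ / (θ + m) * (Nf m l / Df θ m l)) =
      (m : ℝ) / (θ + 1) -
        (θ * ((n : ℝ) + 1) + m) * (θ + (m : ℝ) - ((n : ℝ) + 1)) * Nf m (n + 1) /
          ((θ + 1) * (θ + (m : ℝ)) * Df θ m (n + 1)) := by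
  have hm0 : (0 : ℝ) < θ + m := by positivity
  have hθ1 : (0 : ℝ) < θ + 1 := by linarith
  intro n hn
  induction n with
  | zero =>
    have hN1 : Nf m 1 = (m : ℝ) := by
      rw [show (1 : ℕ) = 0 + 1 from rfl, Nf_succ]
      unfold Nf
      simp
    have hD1 : Df θ m 1 = θ + (m : ℝ) - 1 := by
      rw [show (1 : ℕ) = 0 + 1 from rfl, Df_succ]
      unfold Df
      simp
    rw [Finset.sum_range_one, hN1, hD1]
    rcases Nat.eq_zero_or_pos m with hm | hm
    · subst hm; simp
    · have hmD : (0 : ℝ) < θ + (m : ℝ) - 1 := by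
        have : (1 : ℝ) ≤ m := by exact_mod_cast hm
        linarith
      field_simp
      ring
  | succ k ih =>
    have hk : k ≤ m := Nat.le_of_succ_le hn
    have ihk := ih hk
    rw [Finset.sum_range_succ, ihk]
    have hterm : ((k + 1 : ℕ) : ℝ) * (θ / (θ + m) * (Nf m (k + 1) / Df θ m (k + 1))) =
        (θ * ((k : ℝ) + 1) + m) * (θ + (m : ℝ) - ((k : ℝ) + 1)) * Nf m (k + 1) /
          ((θ + 1) * (θ + (m : ℝ)) * Df θ m (k + 1)) -
        (θ * (((k : ℝ) + 1) + 1) + m) * (θ + (m : ℝ) - (((k : ℝ) + 1) + 1)) * Nf m (k + 2) /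
          ((θ + 1) * (θ + (m : ℝ)) * Df θ m (k + 2)) := by
      have hDk1 : (0 : ℝ) < Df θ m (k + 1) := Df_pos θ hθ m (k + 1) hn
      rcases lt_or_eq_of_le hn with hlt | heq
      · -- k + 1 < m
        have hk2 : k + 2 ≤ m := hlt
        have hDk2 : (0 : ℝ) < Df θ m (k + 2) := Df_pos θ hθ m (k + 2) hk2
        have hN2 : Nf m (k + 2) = ((m : ℝ) - (k + 1)) * Nf m (k + 1) := by
          have := Nf_succ m (k + 1); push_cast at this ⊢; linarith [this]
        have hD2 : Df θ m (k + 2) = (θ + (m : ℝ) - (k + 1) - 1) * Df θ m (k + 1) := by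
          have := Df_succ θ m (k + 1); push_cast at this ⊢; linarith [this]
        have hfac : (0 : ℝ) < θ + (m : ℝ) - (k + 1) - 1 := by
          have : ((k : ℝ) + 2) ≤ m := by exact_mod_cast hk2
          linarith
        rw [hN2, hD2]
        push_cast
        field_simp
        ring
      · -- k + 1 = m
        have hN2 : Nf m (k + 2) = 0 := by
          have h := Nf_succ m (k + 1)
          have : (m : ℝ) - ((k : ℝ) + 1) = 0 := by
            have : ((k + 1 : ℕ) : ℝ) = m := by exact_mod_cast heq
            push_cast at this; linarith
          rw [show k + 2 = (k + 1) + 1 from rfl, h]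
          push_cast
          rw [this, zero_mul]
        rw [hN2]
        have hmk : (m : ℝ) = (k : ℝ) + 1 := by
          have : ((k + 1 : ℕ) : ℝ) = m := by exact_mod_cast heq
          push_cast at this; linarith
        push_cast
        rw [hmk]
        field_simp
        ring
    push_cast at hterm ⊢
    linarith [hterm]

end DPMarginalAux

theorem dp_marginal_frequency_mean (θ : ℝ) (hθ : 0 < θ) (m : ℕ) :
    ∑ l ∈ Finset.range (m + 1),
        (l : ℝ) * (θ / (θ + m) *
          ((∏ i ∈ Finset.range l, ((m : ℝ) - l + 1 + i)) /
            (∏ i ∈ Finset.range l, (θ + (m : ℝ) - l + i)))) = (m : ℝ) / (θ + 1) := by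
  have h := DPMarginalAux.key θ hθ m m le_rfl
  have hN : DPMarginalAux.Nf m (m + 1) = 0 := by
    rw [DPMarginalAux.Nf_succ]
    simp
  rw [hN] at h
  simp only [mul_zero, zero_div, sub_zero] at h
  exact h
end

section
/- For θ>0, α∈(0,1) and integers m≥1, the probabilities Pr[K_m = k] = ((θ/α)_(k)/(θ)_(m)) · C(m,k;α) for k=1,…,m sum to 1, where C(m,k;α) is the generalized factorial coefficient. -/
/-- Generalized factorial coefficient
`C(m,k;α) = (1/k!) ∑_{i=0}^{k} binom(k,i) (-1)^i (-iα)_(m)`. -/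
noncomputable def genFactCoeff (α : ℝ) (m k : ℕ) : ℝ :=
  (1 / (k.factorial : ℝ)) *
    ∑ i ∈ Finset.range (k + 1),
      (k.choose i : ℝ) * (-1) ^ i * ∏ j ∈ Finset.range m, (-((i : ℝ) * α) + j)

lemma gfc_choose_aux (k i : ℕ) : (k+1-i) * Nat.choose (k+1) i = (k+1) * Nat.choose k i := by
  rcases Nat.lt_or_ge i (k+2) with h | h
  · rcases Nat.eq_or_lt_of_le (Nat.lt_succ_iff.mp h) with rfl | h'
    · simp
    · have h1 := Nat.choose_succ_right_eq (k+1) i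
      have h2 := Nat.add_one_mul_choose_eq k i
      rw [mul_comm, ← h1, h2.symm, mul_comm]
  · rw [Nat.choose_eq_zero_of_lt (by omega), Nat.choose_eq_zero_of_lt (by omega)]; simp

/-- Recurrence `C(m+1,k+1;α) = (m-(k+1)α) C(m,k+1;α) + α C(m,k;α)`. -/
lemma gfc_rec (α : ℝ) (m k : ℕ) :
    genFactCoeff α (m+1) (k+1)
      = ((m : ℝ) - (k+1)*α) * genFactCoeff α m (k+1) + α * genFactCoeff α m k := by
  unfold genFactCoeff
  have hP : ∀ i : ℕ, ∏ j ∈ Finset.range (m+1), (-((i:ℝ)*α)+(j:ℝ))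
      = (∏ j ∈ Finset.range m, (-((i:ℝ)*α)+(j:ℝ))) * ((m:ℝ) - (i:ℝ)*α) := by
    intro i; rw [Finset.prod_range_succ]; ring
  have key : ∀ i ∈ Finset.range (k+2),
      ((k+1).choose i : ℝ) * (-1)^i * ∏ j ∈ Finset.range (m+1), (-((i:ℝ)*α)+(j:ℝ))
        = ((m:ℝ) - (k+1)*α) * (((k+1).choose i : ℝ) * (-1)^i *
            ∏ j ∈ Finset.range m, (-((i:ℝ)*α)+(j:ℝ)))
          + ((k:ℝ)+1) * α * ((k.choose i : ℝ) * (-1)^i *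
            ∏ j ∈ Finset.range m, (-((i:ℝ)*α)+(j:ℝ))) := by
    intro i hi
    have hi' : i ≤ k+1 := by simpa using Nat.lt_succ_iff.mp (Finset.mem_range.mp hi)
    have hc : (((k:ℝ)+1) - (i:ℝ)) * ((k+1).choose i : ℝ)
        = ((k:ℝ)+1) * (k.choose i : ℝ) := by
      have h := gfc_choose_aux k i
      have : (((k+1-i) * Nat.choose (k+1) i : ℕ) : ℝ) = (((k+1) * Nat.choose k i : ℕ) : ℝ) := by
        exact_mod_cast congrArg (Nat.cast (R := ℝ)) h
      rw [Nat.cast_mul, Nat.cast_mul, Nat.cast_sub hi'] at this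
      push_cast at this ⊢
      linarith [this]
    rw [hP i]
    linear_combination (α * (-1)^i * ∏ j ∈ Finset.range m, (-((i:ℝ)*α)+(j:ℝ))) * hc
  rw [Finset.sum_congr rfl key, Finset.sum_add_distrib, ← Finset.mul_sum, ← Finset.mul_sum]
  have hlast : ∑ i ∈ Finset.range (k+2),
      (k.choose i : ℝ) * (-1)^i * ∏ j ∈ Finset.range m, (-((i:ℝ)*α)+(j:ℝ))
      = ∑ i ∈ Finset.range (k+1),
      (k.choose i : ℝ) * (-1)^i * ∏ j ∈ Finset.range m, (-((i:ℝ)*α)+(j:ℝ)) := by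
    rw [Finset.sum_range_succ, Nat.choose_succ_self]; simp
  rw [hlast]
  have hfac : ((k+1).factorial : ℝ) = ((k:ℝ)+1) * (k.factorial : ℝ) := by
    rw [Nat.factorial_succ]; push_cast; ring
  have hk0 : (k.factorial : ℝ) ≠ 0 := Nat.cast_ne_zero.mpr (Nat.factorial_ne_zero k)
  have hk1 : ((k:ℝ)+1) ≠ 0 := by positivity
  rw [hfac]
  field_simp

/-- `C(m,0;α) = 0` for `m ≥ 1`. -/
lemma gfc_zero (α : ℝ) (m : ℕ) (hm : 0 < m) : genFactCoeff α m 0 = 0 := by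
  unfold genFactCoeff
  rw [Finset.sum_range_one]
  have hp : (∏ j ∈ Finset.range m, (-(((0:ℕ):ℝ) * α) + (j:ℝ))) = 0 :=
    Finset.prod_eq_zero (Finset.mem_range.mpr hm) (by norm_num)
  rw [hp]
  simp

/-- Vanishing: `C(m,k;α) = 0` for `m < k`. -/
lemma gfc_vanish (α : ℝ) : ∀ m k : ℕ, m < k → genFactCoeff α m k = 0 := by
  intro m
  induction m with
  | zero =>
    intro k hk
    unfold genFactCoeff
    simp only [Finset.range_zero, Finset.prod_empty, mul_one]
    obtain ⟨n, rfl⟩ : ∃ n, k = n + 1 := ⟨k - 1, by omega⟩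
    have h := Int.alternating_sum_range_choose (n := n+1)
    rw [if_neg (Nat.succ_ne_zero n)] at h
    have h2 : ∑ i ∈ Finset.range (n + 1 + 1), ((n+1).choose i : ℝ) * (-1) ^ i = 0 := by
      calc ∑ i ∈ Finset.range (n + 1 + 1), ((n+1).choose i : ℝ) * (-1) ^ i
          = ((∑ i ∈ Finset.range (n + 1 + 1), (-1:ℤ) ^ i * ((n+1).choose i : ℤ) : ℤ) : ℝ) := by
            push_cast
            exact Finset.sum_congr rfl fun i _ => by ring
        _ = 0 := by rw [h]; norm_num
    rw [h2, mul_zero]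
  | succ m ih =>
    intro k hk
    obtain ⟨n, rfl⟩ : ∃ n, k = n + 1 := ⟨k - 1, by omega⟩
    rw [gfc_rec, ih (n+1) (by omega), ih n (by omega)]
    ring

/-- Key identity: `∑_{k=0}^{m} C(m,k;α) (x)_k = (αx)_m`. -/
lemma gfc_key (α : ℝ) : ∀ m : ℕ, ∀ x : ℝ,
    ∑ k ∈ Finset.range (m+1), genFactCoeff α m k * ∏ i ∈ Finset.range k, (x + (i:ℝ))
      = ∏ j ∈ Finset.range m, (α * x + (j:ℝ)) := by
  intro m
  induction m with
  | zero => intro x; simp [genFactCoeff]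
  | succ m ih =>
    intro x
    rw [Finset.sum_range_succ', gfc_zero α (m+1) (Nat.succ_pos m)]
    simp only [Finset.range_zero, Finset.prod_empty, mul_one, mul_zero, zero_mul, add_zero]
    have step : ∀ k ∈ Finset.range (m+1),
        genFactCoeff α (m+1) (k+1) * ∏ i ∈ Finset.range (k+1), (x + (i:ℝ))
        = (((m:ℝ) - ((k:ℝ)+1)*α) * genFactCoeff α m (k+1))
              * ∏ i ∈ Finset.range (k+1), (x + (i:ℝ))
          + (α * (x + (k:ℝ))) * (genFactCoeff α m k * ∏ i ∈ Finset.range k, (x + (i:ℝ))) := by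
      intro k hk
      rw [gfc_rec, Finset.prod_range_succ]
      ring
    rw [Finset.sum_congr rfl step, Finset.sum_add_distrib]
    -- first piece: shift the index back
    have hA : ∑ k ∈ Finset.range (m+1),
        (((m:ℝ) - ((k:ℝ)+1)*α) * genFactCoeff α m (k+1)) * ∏ i ∈ Finset.range (k+1), (x + (i:ℝ))
        = ∑ k ∈ Finset.range (m+1),
          (((m:ℝ) - (k:ℝ)*α) * genFactCoeff α m k) * ∏ i ∈ Finset.range k, (x + (i:ℝ)) := by
      rw [Finset.sum_range_succ, gfc_vanish α m (m+1) (Nat.lt_succ_self m)]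
      conv_rhs => rw [Finset.sum_range_succ']
      have hg0 : (((m:ℝ) - ((0:ℕ):ℝ)*α) * genFactCoeff α m 0)
          * ∏ i ∈ Finset.range 0, (x + (i:ℝ)) = 0 := by
        rcases Nat.eq_zero_or_pos m with rfl | hm
        · simp
        · rw [gfc_zero α m hm]; ring
      rw [hg0, add_zero]
      simp only [mul_zero, zero_mul, add_zero]
      refine Finset.sum_congr rfl fun k _ => ?_
      push_cast
      ring
    rw [hA, ← Finset.sum_add_distrib]
    have comb : ∀ k ∈ Finset.range (m+1),
        (((m:ℝ) - (k:ℝ)*α) * genFactCoeff α m k) * ∏ i ∈ Finset.range k, (x + (i:ℝ))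
          + (α * (x + (k:ℝ))) * (genFactCoeff α m k * ∏ i ∈ Finset.range k, (x + (i:ℝ)))
        = (α * x + (m:ℝ)) * (genFactCoeff α m k * ∏ i ∈ Finset.range k, (x + (i:ℝ))) := by
      intro k hk; ring
    rw [Finset.sum_congr rfl comb, ← Finset.mul_sum, ih x, Finset.prod_range_succ]
    ring

theorem pyp_distinct_count_sums_to_one (θ α : ℝ) (hθ : 0 < θ)
    (hα : α ∈ Set.Ioo (0 : ℝ) 1) (m : ℕ) (hm : 1 ≤ m) :
    ∑ k ∈ Finset.Icc 1 m,
        ((∏ i ∈ Finset.range k, (θ / α + i)) / (∏ i ∈ Finset.range m, (θ + i))) *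
          genFactCoeff α m k = 1 := by
  obtain ⟨hα0, hα1⟩ := hα
  have hαne : α ≠ 0 := ne_of_gt hα0
  have hDpos : 0 < ∏ i ∈ Finset.range m, (θ + (i:ℝ)) := by
    apply Finset.prod_pos
    intro i _
    positivity
  have hDne : (∏ i ∈ Finset.range m, (θ + (i:ℝ))) ≠ 0 := ne_of_gt hDpos
  have hkey := gfc_key α m (θ / α)
  have hαx : α * (θ / α) = θ := by field_simp
  rw [hαx] at hkey
  have hIcc : ∑ k ∈ Finset.Icc 1 m,
      genFactCoeff α m k * ∏ i ∈ Finset.range k, (θ / α + (i:ℝ))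
      = ∑ k ∈ Finset.range (m+1),
      genFactCoeff α m k * ∏ i ∈ Finset.range k, (θ / α + (i:ℝ)) := by
    rw [show Finset.range (m+1) = Finset.Icc 0 m by
      ext a; simp [Nat.lt_succ_iff]]
    rw [← Finset.sum_Ioc_add_eq_sum_Icc (by omega : (0:ℕ) ≤ m)]
    have h01 : Finset.Ioc 0 m = Finset.Icc 1 m := by ext a; simp; omega
    rw [h01, gfc_zero α m (by omega)]
    simp
  have hmain : ∑ k ∈ Finset.Icc 1 m,
        ((∏ i ∈ Finset.range k, (θ / α + i)) / (∏ i ∈ Finset.range m, (θ + i))) *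
          genFactCoeff α m k
      = (∑ k ∈ Finset.Icc 1 m,
          genFactCoeff α m k * ∏ i ∈ Finset.range k, (θ / α + (i:ℝ)))
        / (∏ i ∈ Finset.range m, (θ + (i:ℝ))) := by
    rw [Finset.sum_div]
    exact Finset.sum_congr rfl fun k _ => by ring
  rw [hmain, hIcc, hkey, div_self hDne]
end
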